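/- For all t ≥ 0 and all z ∈ 𝔻, with φ_t(z) = e^{-t}z + 1 - e^{-t}, one has Re( (φ_t(z)+1)/(φ_t(z)-1) - (z+1)/(z-1) ) ≤ 0. -/

import Mathlib

open Complex Metric

noncomputable def phiFlow (t : ℝ) (z : ℂ) : ℂ :=
  (Real.exp (-t) : ℂ) * z + 1 - (Real.exp (-t) : ℂ)

/-! In the left half-plane coordinate `w = (z+1)/(z-1) = 1 + 2/(z-1)`, the map
`φ_t(z) = 1 + e^{-t}(z-1)` multiplies `2/(z-1)` by `e^t`, so the difference in the statement is
`(e^t - 1) · 2/(z-1)`, a non-negative real multiple of a point of the closed left half-plane. -/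

lemma phiFlow_eq (t : ℝ) (z : ℂ) : phiFlow t z = 1 + (Real.exp (-t) : ℂ) * (z - 1) := by
  unfold phiFlow; ring

/-- At `z = 1` both sides vanish because of the junk value `x / 0 = 0`. -/
lemma cayley_affine_sub_cayley {c : ℂ} (hc : c ≠ 0) (z : ℂ) :
    (1 + c * (z - 1) + 1) / (1 + c * (z - 1) - 1) - (z + 1) / (z - 1)
      = (c⁻¹ - 1) * (2 / (z - 1)) := by
  rcases eq_or_ne z 1 with rfl | hz
  · simp
  have hz' : z - 1 ≠ 0 := sub_ne_zero.2 hz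
  field_simp
  ring

lemma re_two_div_sub_one_nonpos {z : ℂ} (hz : z.re ≤ 1) : (2 / (z - 1)).re ≤ 0 := by
  rw [div_eq_mul_inv, ← ofReal_ofNat, re_ofReal_mul, inv_re]
  have hre : (z - 1).re ≤ 0 := by simpa using hz
  exact mul_nonpos_of_nonneg_of_nonpos zero_le_two
    (div_nonpos_of_nonpos_of_nonneg hre (normSq_nonneg _))

theorem re_phiFlow_diff_nonpos (t : ℝ) (ht : 0 ≤ t) (z : ℂ) (hz : z ∈ ball (0 : ℂ) 1) :
    ((phiFlow t z + 1) / (phiFlow t z - 1) - (z + 1) / (z - 1)).re ≤ 0 := by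
  have hre : z.re ≤ 1 := (re_le_norm z).trans (by simpa using (mem_ball_zero_iff.1 hz).le)
  have hexp_pos : 0 < Real.exp (-t) := Real.exp_pos _
  have hexp_le : Real.exp (-t) ≤ 1 := Real.exp_le_one_iff.2 (neg_nonpos.2 ht)
  rw [phiFlow_eq, cayley_affine_sub_cayley (ofReal_ne_zero.2 hexp_pos.ne'), ← ofReal_inv,
    ← ofReal_one, ← ofReal_sub, re_ofReal_mul]
  exact mul_nonpos_of_nonneg_of_nonpos (sub_nonneg.2 ((one_le_inv₀ hexp_pos).2 hexp_le))
    (re_two_div_sub_one_nonpos hre)
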